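/- Let λ₁,…,λ_m be real numbers with H_j > 0 for all 1 ≤ j ≤ k. Then for all 0 ≤ i < j ≤ k: (H_i/H_j)^{1/(j-i)} ≥ 1/H_1. -/

import Mathlib

open Finset

/-- The `k`-th elementary symmetric polynomial of `λ₁,…,λ_m`. -/
noncomputable def esymm (m k : ℕ) (lam : Fin m → ℝ) : ℝ :=
  ∑ s ∈ (Finset.univ : Finset (Fin m)).powersetCard k, ∏ i ∈ s, lam i

/-- The `k`-th elementary symmetric polynomial of the `m−1` variables with `λ_l` omitted. -/
noncomputable def esymmOmit (m k : ℕ) (lam : Fin m → ℝ) (l : Fin m) : ℝ :=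
  ∑ s ∈ ((Finset.univ : Finset (Fin m)).erase l).powersetCard k, ∏ i ∈ s, lam i

/-- Normalized `k`-th elementary symmetric function `H_k = σ_k / C(m,k)`. -/
noncomputable def Hk (m k : ℕ) (lam : Fin m → ℝ) : ℝ := esymm m k lam / (m.choose k)

/-- Normalized `k`-th elementary symmetric function of the tuple with `λ_l` omitted. -/
noncomputable def HkOmit (m k : ℕ) (lam : Fin m → ℝ) (l : Fin m) : ℝ :=
  esymmOmit m k lam l / ((m - 1).choose k)

/-! Newton's inequalities `H_t H_{t+2} ≤ H_{t+1}²` hold for every real tuple, by induction on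
the number of variables. Differentiating `∏ (X - λ_i)` preserves the means `H_0, …, H_{n-1}` and,
by Rolle, keeps all roots real; inverting every `λ_i` reverses the sequence of means up to the
factor `∏ λ_i`, which turns the top inequality into the one at index `0`; with two variables it is
AM–GM. Once `H_0, …, H_k > 0`, Newton's inequalities make `H_{t+1} / H_t` non-increasing, so
`H_j ≤ H_1 ^ (j - i) H_i`. -/

open Polynomial

namespace Multiset

section CommSemiring

variable {R : Type*} [CommSemiring R]

@[simp] theorem esymm_zero (s : Multiset R) : s.esymm 0 = 1 := by
  simp [esymm]

theorem esymm_eq_zero_of_card_lt (s : Multiset R) {j : ℕ} (h : card s < j) : s.esymm j = 0 := by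
  simp [esymm, powersetCard_eq_empty _ h]

theorem esymm_cons_succ (a : R) (s : Multiset R) (j : ℕ) :
    (a ::ₘ s).esymm (j + 1) = s.esymm (j + 1) + a * s.esymm j := by
  simp [esymm, powersetCard_cons, sum_map_mul_left]

theorem esymm_card (s : Multiset R) : s.esymm (card s) = s.prod := by
  induction s using Multiset.induction with
  | empty => simp
  | cons a s ih =>
    rw [card_cons, esymm_cons_succ, esymm_eq_zero_of_card_lt s (Nat.lt_succ_self _), ih, prod_cons]
    ring

end CommSemiring

section Field

variable {K : Type*} [Field K]

theorem prod_mul_esymm_map_inv {s : Multiset K} (hs : (0 : K) ∉ s) {i j : ℕ}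
    (hij : i + j = card s) : s.prod * (s.map Inv.inv).esymm i = s.esymm j := by
  induction s using Multiset.induction generalizing i j with
  | empty =>
    obtain ⟨rfl, rfl⟩ : i = 0 ∧ j = 0 := by simpa using hij
    simp
  | cons a s ih =>
    have ha : a ≠ 0 := fun h => hs (h ▸ mem_cons_self a s)
    have hs' : (0 : K) ∉ s := fun h => hs (mem_cons_of_mem h)
    rw [card_cons] at hij
    rcases i with _ | i
    · rw [zero_add] at hij
      rw [esymm_zero, mul_one, hij, ← card_cons, esymm_card]
    rcases j with _ | j
    · rw [add_zero] at hij
      rw [esymm_zero, hij, ← card_cons, ← card_map Inv.inv, esymm_card, prod_map_inv',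
        mul_inv_cancel₀ (prod_ne_zero hs)]
    rw [map_cons, esymm_cons_succ, esymm_cons_succ, prod_cons,
      ← ih hs' (by omega : i + (j + 1) = _), ← ih hs' (by omega : i + 1 + j = _)]
    field_simp
    ring

noncomputable def esymmMean (s : Multiset K) (j : ℕ) : K := s.esymm j / (card s).choose j

theorem prod_mul_esymmMean_map_inv {s : Multiset K} (hs : (0 : K) ∉ s) {i j : ℕ}
    (hij : i + j = card s) : s.prod * (s.map Inv.inv).esymmMean i = s.esymmMean j := by
  rw [esymmMean, esymmMean, card_map, mul_div_assoc', prod_mul_esymm_map_inv hs hij,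
    Nat.choose_symm_of_eq_add hij.symm]

end Field

theorem exists_derivative_prod_X_sub_C_eq (s : Multiset ℝ) {n : ℕ} (hs : card s = n + 1) :
    ∃ t : Multiset ℝ, card t = n ∧
      derivative (s.map (X - C ·)).prod = C ((n : ℝ) + 1) * (t.map (X - C ·)).prod := by
  set p := (s.map (X - C ·)).prod
  have hp : p.natDegree = n + 1 := by rw [natDegree_multiset_prod_X_sub_C_eq_card, hs]
  have hdeg : (derivative p).natDegree = n := by rw [natDegree_derivative, hp]; rfl
  -- Rolle: between consecutive roots of `p` lies a root of `p'`
  have hroots : card (derivative p).roots = n := by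
    have := p.card_roots_le_derivative
    rw [roots_multiset_prod_X_sub_C, hs] at this
    exact le_antisymm (hdeg ▸ card_roots' _) (by omega)
  refine ⟨_, hroots, ?_⟩
  conv_lhs => rw [← C_leadingCoeff_mul_prod_multiset_X_sub_C (hroots.trans hdeg.symm)]
  rw [leadingCoeff_derivative, hp, (monic_multisetProd_X_sub_C s).leadingCoeff, one_mul,
    Nat.cast_add_one]

theorem exists_esymmMean_eq_of_card_eq_succ (s : Multiset ℝ) {n : ℕ} (hs : card s = n + 1) :
    ∃ t : Multiset ℝ, card t = n ∧ ∀ j ≤ n, s.esymmMean j = t.esymmMean j := by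
  obtain ⟨t, ht, hst⟩ := exists_derivative_prod_X_sub_C_eq s hs
  refine ⟨t, ht, fun j hj => ?_⟩
  have hcoeff := congrArg (coeff · (n - j)) hst
  simp only [coeff_derivative, coeff_C_mul] at hcoeff
  rw [prod_X_sub_C_coeff s (by omega), prod_X_sub_C_coeff t (by omega), hs, ht,
    show n + 1 - (n - j + 1) = j by omega, show n - (n - j) = j by omega] at hcoeff
  have hesymm : s.esymm j * ((n - j : ℕ) + 1) = (n + 1) * t.esymm j :=
    mul_left_cancel₀ (pow_ne_zero j (neg_ne_zero.2 one_ne_zero)) (by linear_combination hcoeff)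
  have hchoose : ((n - j : ℕ) + 1 : ℝ) * (n + 1).choose j = (n + 1) * n.choose j := by
    have := Nat.choose_mul_succ_eq n j
    rw [show n + 1 - j = n - j + 1 by omega] at this
    exact_mod_cast by rw [mul_comm, ← this, mul_comm]
  rw [esymmMean, esymmMean, hs, ht,
    div_eq_div_iff (Nat.cast_ne_zero.2 (Nat.choose_pos (by omega)).ne')
      (Nat.cast_ne_zero.2 (Nat.choose_pos hj).ne')]
  refine mul_left_cancel₀ (n.cast_add_one_ne_zero) ?_
  linear_combination ((n + 1).choose j : ℝ) * hesymm - s.esymm j * hchoose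

theorem esymmMean_eq_zero_of_card_lt {s : Multiset ℝ} {j : ℕ} (h : card s < j) :
    s.esymmMean j = 0 := by
  rw [esymmMean, esymm_eq_zero_of_card_lt s h, zero_div]

theorem esymmMean_mul_esymmMean_le_sq_of_card_eq_two {s : Multiset ℝ} (hs : card s = 2) :
    s.esymmMean 0 * s.esymmMean 2 ≤ s.esymmMean 1 ^ 2 := by
  obtain ⟨x, y, rfl⟩ := card_eq_two.1 hs
  norm_num [esymmMean, insert_eq_cons]
  nlinarith [sq_nonneg (x - y)]

theorem esymmMean_mul_esymmMean_le_sq_of_map_inv {s : Multiset ℝ} (hs : (0 : ℝ) ∉ s)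
    {i k : ℕ} (hik : i + (k + 2) = card s)
    (h : (s.map Inv.inv).esymmMean i * (s.map Inv.inv).esymmMean (i + 2) ≤
      (s.map Inv.inv).esymmMean (i + 1) ^ 2) :
    s.esymmMean k * s.esymmMean (k + 2) ≤ s.esymmMean (k + 1) ^ 2 := by
  rw [← prod_mul_esymmMean_map_inv hs (i := i + 2) (by omega),
    ← prod_mul_esymmMean_map_inv hs hik, ← prod_mul_esymmMean_map_inv hs (i := i + 1) (by omega)]
  calc _ = s.prod ^ 2 * ((s.map Inv.inv).esymmMean i * (s.map Inv.inv).esymmMean (i + 2)) := by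
        ring
    _ ≤ s.prod ^ 2 * (s.map Inv.inv).esymmMean (i + 1) ^ 2 := by gcongr
    _ = _ := by ring

theorem esymmMean_mul_esymmMean_le_sq (s : Multiset ℝ) (k : ℕ) :
    s.esymmMean k * s.esymmMean (k + 2) ≤ s.esymmMean (k + 1) ^ 2 := by
  induction hn : card s generalizing s k with
  | zero => rw [esymmMean_eq_zero_of_card_lt (j := k + 2) (by omega), mul_zero]; positivity
  | succ n ih =>
    have by_derivative : ∀ u : Multiset ℝ, card u = n + 1 → ∀ k, k + 2 ≤ n →
        u.esymmMean k * u.esymmMean (k + 2) ≤ u.esymmMean (k + 1) ^ 2 := by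
      intro u hu k hk
      obtain ⟨t, ht, hut⟩ := exists_esymmMean_eq_of_card_eq_succ u hu
      rw [hut k (by omega), hut (k + 1) (by omega), hut (k + 2) (by omega)]
      exact ih t k ht
    rcases lt_trichotomy (k + 2) (n + 1) with hlt | htop | hgt
    · exact by_derivative s hn k (by omega)
    · by_cases hzero : (0 : ℝ) ∈ s
      · have hvanish : s.esymmMean (k + 2) = 0 := by
          rw [esymmMean, htop, ← hn, esymm_card, prod_eq_zero hzero, zero_div]
        rw [hvanish, mul_zero]
        positivity
      rcases k with _ | k
      · exact esymmMean_mul_esymmMean_le_sq_of_card_eq_two (by omega)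
      · exact esymmMean_mul_esymmMean_le_sq_of_map_inv hzero (i := 0) (by omega)
          (by_derivative _ (by rw [card_map, hn]) 0 (by omega))
    · rw [esymmMean_eq_zero_of_card_lt (j := k + 2) (by omega), mul_zero]; positivity

end Multiset

theorem succ_mul_zero_le_of_log_concave {a : ℕ → ℝ} {k : ℕ} (hpos : ∀ t ≤ k, 0 < a t)
    (hlc : ∀ t, a t * a (t + 2) ≤ a (t + 1) ^ 2) {u : ℕ} (hu : u + 1 ≤ k) :
    a (u + 1) * a 0 ≤ a 1 * a u := by
  induction u with
  | zero => exact le_rfl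
  | succ u ih =>
    have h0 := hpos 0 (by omega)
    have hu1 := hpos (u + 1) (by omega)
    refine le_of_mul_le_mul_right ?_ (hpos u (by omega))
    calc a (u + 2) * a 0 * a u = a u * a (u + 2) * a 0 := by ring
      _ ≤ a (u + 1) ^ 2 * a 0 := by gcongr; exact hlc u
      _ = a (u + 1) * (a (u + 1) * a 0) := by ring
      _ ≤ a (u + 1) * (a 1 * a u) := mul_le_mul_of_nonneg_left (ih (by omega)) hu1.le
      _ = a 1 * a (u + 1) * a u := by ring

theorem add_mul_pow_le_of_log_concave {a : ℕ → ℝ} {k : ℕ} (hpos : ∀ t ≤ k, 0 < a t)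
    (hlc : ∀ t, a t * a (t + 2) ≤ a (t + 1) ^ 2) {i d : ℕ} (h : i + d ≤ k) :
    a (i + d) * a 0 ^ d ≤ a 1 ^ d * a i := by
  induction d with
  | zero => simp
  | succ d ih =>
    have h0 := hpos 0 (by omega)
    have h1 := hpos 1 (by omega)
    calc a (i + (d + 1)) * a 0 ^ (d + 1) = a (i + d + 1) * a 0 * a 0 ^ d := by ring_nf
      _ ≤ a 1 * a (i + d) * a 0 ^ d :=
        mul_le_mul_of_nonneg_right (succ_mul_zero_le_of_log_concave hpos hlc (by omega))
          (by positivity)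
      _ = a 1 * (a (i + d) * a 0 ^ d) := by ring
      _ ≤ a 1 * (a 1 ^ d * a i) := mul_le_mul_of_nonneg_left (ih (by omega)) h1.le
      _ = a 1 ^ (d + 1) * a i := by ring

theorem Hk_eq_esymmMean (m t : ℕ) (lam : Fin m → ℝ) :
    Hk m t lam = (univ.val.map lam).esymmMean t := by
  rw [Hk, esymm, Multiset.esymmMean, Finset.esymm_map_val, Multiset.card_map, Finset.card_val,
    Finset.card_univ, Fintype.card_fin]

theorem Hk_zero (m : ℕ) (lam : Fin m → ℝ) : Hk m 0 lam = 1 := by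
  simp [Hk_eq_esymmMean, Multiset.esymmMean]

theorem Hk_mul_Hk_le_sq (m t : ℕ) (lam : Fin m → ℝ) :
    Hk m t lam * Hk m (t + 2) lam ≤ Hk m (t + 1) lam ^ 2 := by
  simp only [Hk_eq_esymmMean]
  exact Multiset.esymmMean_mul_esymmMean_le_sq _ t

/-- (H_i/H_j)^{1/(j-i)} ≥ 1/H_1. -/
theorem ratio_rpow_ge (m k : ℕ) (lam : Fin m → ℝ)
    (hpos : ∀ j, 1 ≤ j → j ≤ k → 0 < Hk m j lam)
    (i j : ℕ) (hij : i < j) (hjk : j ≤ k) :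
    1 / Hk m 1 lam ≤ (Hk m i lam / Hk m j lam) ^ ((1 : ℝ) / ((j : ℝ) - (i : ℝ))) := by
  have hpos₀ : ∀ t ≤ k, 0 < Hk m t lam := fun t ht => by
    rcases t.eq_zero_or_pos with rfl | h
    · rw [Hk_zero]; exact one_pos
    · exact hpos t h ht
  obtain ⟨d, rfl⟩ := Nat.exists_eq_add_of_lt hij
  have hchain := add_mul_pow_le_of_log_concave hpos₀ (Hk_mul_Hk_le_sq m · lam) (d := d + 1)
    (by omega)
  rw [Hk_zero, one_pow, mul_one, ← add_assoc] at hchain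
  have hexp : ((i + d + 1 : ℕ) : ℝ) - i = (d + 1 : ℕ) := by push_cast; ring
  have hH1 := hpos₀ 1 (by omega)
  have hHj := hpos₀ (i + d + 1) hjk
  rw [hexp, one_div ((d + 1 : ℕ) : ℝ), Real.le_rpow_inv_iff_of_pos (by positivity)
    (div_pos (hpos₀ i (by omega)) hHj).le (by positivity), Real.rpow_natCast, div_pow, one_pow,
    div_le_div_iff₀ (by positivity) hHj, one_mul, mul_comm]
  exact hchain
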